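/- Let Σ, Σ₁, Σ₂ be systems in driving variable form with the same external space W, and let S₁ ⊆ X × X₁ and S₂ ⊆ X × X₂ be full simulation relations of Σ by Σ₁ and of Σ by Σ₂, respectively. Then the subspace S = {(x, (x₁, x₂)) : (x, x₁) ∈ S₁ and (x, x₂) ∈ S₂} is a full simulation relation of Σ by Σ₁ ∘ Σ₂; in particular π_{X₁×X₂}(S) ⊆ V∘,* and π_X(S) = V*, where V∘,* is the consistent subspace of Σ₁ ∘ Σ₂ and V* that of Σ. -/

import Mathlib

/-- A linear system in driving variable form `ẋ = A x + G d`, `w = C x`, `0 = H x`. -/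
structure DVSystem (X W D Y : Type)
    [AddCommGroup X] [Module ℝ X] [AddCommGroup W] [Module ℝ W]
    [AddCommGroup D] [Module ℝ D] [AddCommGroup Y] [Module ℝ Y] where
  A : X →ₗ[ℝ] X
  G : D →ₗ[ℝ] X
  C : X →ₗ[ℝ] W
  H : X →ₗ[ℝ] Y

namespace DVSystem

section basic

variable {X W D Y : Type}
  [AddCommGroup X] [Module ℝ X] [AddCommGroup W] [Module ℝ W]
  [AddCommGroup D] [Module ℝ D] [AddCommGroup Y] [Module ℝ Y]

/-- A subspace `U` is consistent-admissible if `A U ⊆ U + im G` and `U ⊆ ker H`. -/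
def Admissible (P : DVSystem X W D Y) (U : Submodule ℝ X) : Prop :=
  U.map P.A ≤ U ⊔ LinearMap.range P.G ∧ U ≤ LinearMap.ker P.H

/-- The consistent subspace `V*`: the largest consistent-admissible subspace. -/
def V (P : DVSystem X W D Y) : Submodule ℝ X :=
  sSup {U | P.Admissible U}

end basic

section sim

variable {W : Type} [AddCommGroup W] [Module ℝ W]
variable {X₁ D₁ Y₁ : Type} [AddCommGroup X₁] [Module ℝ X₁]
  [AddCommGroup D₁] [Module ℝ D₁] [AddCommGroup Y₁] [Module ℝ Y₁]
variable {X₂ D₂ Y₂ : Type} [AddCommGroup X₂] [Module ℝ X₂]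
  [AddCommGroup D₂] [Module ℝ D₂] [AddCommGroup Y₂] [Module ℝ Y₂]

/-- Items (i)-(ii) of the (algebraic) definition of a simulation relation. -/
def SimConds (P₁ : DVSystem X₁ W D₁ Y₁) (P₂ : DVSystem X₂ W D₂ Y₂)
    (S : Submodule ℝ (X₁ × X₂)) : Prop :=
  ∀ x₁ x₂, (x₁, x₂) ∈ S →
    (∀ d₁ : D₁, P₁.A x₁ + P₁.G d₁ ∈ P₁.V →
      ∃ d₂ : D₂, P₂.A x₂ + P₂.G d₂ ∈ P₂.V ∧
        (P₁.A x₁ + P₁.G d₁, P₂.A x₂ + P₂.G d₂) ∈ S) ∧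
    P₁.C x₁ = P₂.C x₂

/-- `S` is a simulation relation of `P₁` by `P₂`. -/
def IsSimRel (P₁ : DVSystem X₁ W D₁ Y₁) (P₂ : DVSystem X₂ W D₂ Y₂)
    (S : Submodule ℝ (X₁ × X₂)) : Prop :=
  S.map (LinearMap.fst ℝ X₁ X₂) ≤ P₁.V ∧ S.map (LinearMap.snd ℝ X₁ X₂) ≤ P₂.V ∧
    SimConds P₁ P₂ S

/-- `S` is a full simulation relation of `P₁` by `P₂`: in addition `π₁(S) = V₁*`. -/
def IsFullSimRel (P₁ : DVSystem X₁ W D₁ Y₁) (P₂ : DVSystem X₂ W D₂ Y₂)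
    (S : Submodule ℝ (X₁ × X₂)) : Prop :=
  IsSimRel P₁ P₂ S ∧ S.map (LinearMap.fst ℝ X₁ X₂) = P₁.V

/-- `P₁ ≼ P₂`: `P₁` is simulated by `P₂`. -/
def Simulates (P₁ : DVSystem X₁ W D₁ Y₁) (P₂ : DVSystem X₂ W D₂ Y₂) : Prop :=
  ∃ S : Submodule ℝ (X₁ × X₂), IsFullSimRel P₁ P₂ S

/-- The composition `P₁ ∘ P₂` obtained by sharing the external variable `w₁ = w₂`. -/
noncomputable def comp (P₁ : DVSystem X₁ W D₁ Y₁) (P₂ : DVSystem X₂ W D₂ Y₂) :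
    DVSystem (X₁ × X₂) W (D₁ × D₂) (Y₁ × Y₂ × W) where
  A := P₁.A.prodMap P₂.A
  G := P₁.G.prodMap P₂.G
  C := (1/2 : ℝ) • (P₁.C ∘ₗ LinearMap.fst ℝ X₁ X₂ + P₂.C ∘ₗ LinearMap.snd ℝ X₁ X₂)
  H := (P₁.H ∘ₗ LinearMap.fst ℝ X₁ X₂).prod
    ((P₂.H ∘ₗ LinearMap.snd ℝ X₁ X₂).prod
      (P₁.C ∘ₗ LinearMap.fst ℝ X₁ X₂ - P₂.C ∘ₗ LinearMap.snd ℝ X₁ X₂))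

end sim

section relcomp

variable {X₁ X₂ X₃ : Type} [AddCommGroup X₁] [Module ℝ X₁]
  [AddCommGroup X₂] [Module ℝ X₂] [AddCommGroup X₃] [Module ℝ X₃]

/-- Composition of linear relations:
`{(x₁, x₃) | ∃ x₂, (x₁, x₂) ∈ S₁₂ ∧ (x₂, x₃) ∈ S₂₃}`. -/
def relComp (S₁₂ : Submodule ℝ (X₁ × X₂)) (S₂₃ : Submodule ℝ (X₂ × X₃)) :
    Submodule ℝ (X₁ × X₃) where
  carrier := {p | ∃ x₂, (p.1, x₂) ∈ S₁₂ ∧ (x₂, p.2) ∈ S₂₃}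
  zero_mem' := ⟨0, S₁₂.zero_mem, S₂₃.zero_mem⟩
  add_mem' := by
    rintro a b ⟨y, hy1, hy2⟩ ⟨z, hz1, hz2⟩
    exact ⟨y + z, S₁₂.add_mem hy1 hz1, S₂₃.add_mem hy2 hz2⟩
  smul_mem' := by
    rintro c a ⟨y, h1, h2⟩
    exact ⟨c • y, S₁₂.smul_mem c h1, S₂₃.smul_mem c h2⟩

/-- The pairing `{(x, (x₁, x₂)) | (x, x₁) ∈ S₁ ∧ (x, x₂) ∈ S₂}` of two relations. -/
def pairRel (S₁ : Submodule ℝ (X₁ × X₂)) (S₂ : Submodule ℝ (X₁ × X₃)) :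
    Submodule ℝ (X₁ × X₂ × X₃) where
  carrier := {p | (p.1, p.2.1) ∈ S₁ ∧ (p.1, p.2.2) ∈ S₂}
  zero_mem' := ⟨S₁.zero_mem, S₂.zero_mem⟩
  add_mem' := by
    rintro a b ⟨ha1, ha2⟩ ⟨hb1, hb2⟩
    exact ⟨S₁.add_mem ha1 hb1, S₂.add_mem ha2 hb2⟩
  smul_mem' := by
    rintro c a ⟨h1, h2⟩
    exact ⟨S₁.smul_mem c h1, S₂.smul_mem c h2⟩

end relcomp

section contract

variable {W : Type} [AddCommGroup W] [Module ℝ W]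
variable {X D Y Xa Da Ya Xg Dg Yg : Type}
  [AddCommGroup X] [Module ℝ X] [AddCommGroup D] [Module ℝ D]
  [AddCommGroup Y] [Module ℝ Y]
  [AddCommGroup Xa] [Module ℝ Xa] [AddCommGroup Da] [Module ℝ Da]
  [AddCommGroup Ya] [Module ℝ Ya]
  [AddCommGroup Xg] [Module ℝ Xg] [AddCommGroup Dg] [Module ℝ Dg]
  [AddCommGroup Yg] [Module ℝ Yg]

/-- `Sys` implements the contract `(Ass, Gar)` if `E ∘ Sys ≼ Gar` for every
compatible environment `E`, i.e., every environment with `E ≼ Ass`. -/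
def Implements (Sys : DVSystem X W D Y)
    (Ass : DVSystem Xa W Da Ya) (Gar : DVSystem Xg W Dg Yg) : Prop :=
  ∀ (Xe De Ye : Type) [AddCommGroup Xe] [Module ℝ Xe] [FiniteDimensional ℝ Xe]
    [AddCommGroup De] [Module ℝ De] [FiniteDimensional ℝ De]
    [AddCommGroup Ye] [Module ℝ Ye] [FiniteDimensional ℝ Ye]
    (E : DVSystem Xe W De Ye),
    Simulates E Ass → Simulates (comp E Sys) Gar

end contract

section refine

variable {W : Type} [AddCommGroup W] [Module ℝ W]
variable {Xa Da Ya Xg Dg Yg Xa' Da' Ya' Xg' Dg' Yg' : Type}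
  [AddCommGroup Xa] [Module ℝ Xa] [AddCommGroup Da] [Module ℝ Da]
  [AddCommGroup Ya] [Module ℝ Ya]
  [AddCommGroup Xg] [Module ℝ Xg] [AddCommGroup Dg] [Module ℝ Dg]
  [AddCommGroup Yg] [Module ℝ Yg]
  [AddCommGroup Xa'] [Module ℝ Xa'] [AddCommGroup Da'] [Module ℝ Da']
  [AddCommGroup Ya'] [Module ℝ Ya']
  [AddCommGroup Xg'] [Module ℝ Xg'] [AddCommGroup Dg'] [Module ℝ Dg']
  [AddCommGroup Yg'] [Module ℝ Yg']

/-- The contract `(Ass', Gar')` refines the contract `(Ass, Gar)`: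
`Ass ≼ Ass'` and `Ass ∘ Gar' ≼ Gar`. -/
def Refines (Ass' : DVSystem Xa' W Da' Ya') (Gar' : DVSystem Xg' W Dg' Yg')
    (Ass : DVSystem Xa W Da Ya) (Gar : DVSystem Xg W Dg Yg) : Prop :=
  Simulates Ass Ass' ∧ Simulates (comp Ass Gar') Gar

end refine

end DVSystem

open DVSystem

section aux

variable {X W D Y : Type}
  [AddCommGroup X] [Module ℝ X] [AddCommGroup W] [Module ℝ W]
  [AddCommGroup D] [Module ℝ D] [AddCommGroup Y] [Module ℝ Y]

/-- The consistent subspace is itself admissible. -/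
theorem admissible_V (P : DVSystem X W D Y) : P.Admissible P.V := by
  constructor
  · have : (P.V).map P.A = ⨆ U ∈ {U | P.Admissible U}, U.map P.A := by
      rw [DVSystem.V, sSup_eq_iSup]; simp [Submodule.map_iSup]
    rw [this]
    apply iSup_le; intro U; apply iSup_le; intro hU
    refine hU.1.trans (sup_le_sup_right ?_ _)
    exact le_sSup hU
  · rw [DVSystem.V]
    apply sSup_le; intro U hU; exact hU.2

theorem V_step (P : DVSystem X W D Y) {x : X} (hx : x ∈ P.V) :
    ∃ d : D, P.A x + P.G d ∈ P.V := by
  have h := (admissible_V P).1 (Submodule.mem_map_of_mem hx)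
  rw [Submodule.mem_sup] at h
  obtain ⟨v, hv, g, hg, hvg⟩ := h
  obtain ⟨d, rfl⟩ := hg
  exact ⟨-d, by rw [map_neg]; rw [← hvg]; simpa using hv⟩

theorem V_ker (P : DVSystem X W D Y) {x : X} (hx : x ∈ P.V) : P.H x = 0 :=
  (admissible_V P).2 hx

end aux

/-- If `S₁` and `S₂` are full simulation relations of `Σ` by `Σ₁` and by `Σ₂`,
then `{(x, (x₁, x₂)) | (x, x₁) ∈ S₁ ∧ (x, x₂) ∈ S₂}` is a full simulation relation
of `Σ` by `Σ₁ ∘ Σ₂`. -/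
theorem pairRel_fullSimRel_comp {W : Type} [AddCommGroup W] [Module ℝ W] [FiniteDimensional ℝ W]
    {X₁ D₁ Y₁ : Type} [AddCommGroup X₁] [Module ℝ X₁] [FiniteDimensional ℝ X₁]
    [AddCommGroup D₁] [Module ℝ D₁] [FiniteDimensional ℝ D₁]
    [AddCommGroup Y₁] [Module ℝ Y₁] [FiniteDimensional ℝ Y₁]
    {X₂ D₂ Y₂ : Type} [AddCommGroup X₂] [Module ℝ X₂] [FiniteDimensional ℝ X₂]
    [AddCommGroup D₂] [Module ℝ D₂] [FiniteDimensional ℝ D₂]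
    [AddCommGroup Y₂] [Module ℝ Y₂] [FiniteDimensional ℝ Y₂]
    {X D Y : Type} [AddCommGroup X] [Module ℝ X] [FiniteDimensional ℝ X]
    [AddCommGroup D] [Module ℝ D] [FiniteDimensional ℝ D]
    [AddCommGroup Y] [Module ℝ Y] [FiniteDimensional ℝ Y]
    (P : DVSystem X W D Y) (P₁ : DVSystem X₁ W D₁ Y₁) (P₂ : DVSystem X₂ W D₂ Y₂)
    (S₁ : Submodule ℝ (X × X₁)) (S₂ : Submodule ℝ (X × X₂))
    (h₁ : IsFullSimRel P P₁ S₁) (h₂ : IsFullSimRel P P₂ S₂) :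
    IsFullSimRel P (comp P₁ P₂) (pairRel S₁ S₂) := by
  obtain ⟨⟨hmap₁, hV₁, hsim₁⟩, hfull₁⟩ := h₁
  obtain ⟨⟨hmap₂, hV₂, hsim₂⟩, hfull₂⟩ := h₂
  -- the image of pairRel under snd
  set U : Submodule ℝ (X₁ × X₂) :=
    (pairRel S₁ S₂).map (LinearMap.snd ℝ X (X₁ × X₂)) with hU
  have memU : ∀ p : X₁ × X₂, p ∈ U ↔ ∃ x : X, (x, p.1) ∈ S₁ ∧ (x, p.2) ∈ S₂ := by
    intro p
    constructor
    · rintro ⟨⟨x, q⟩, ⟨h1, h2⟩, rfl⟩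
      exact ⟨x, h1, h2⟩
    · rintro ⟨x, h1, h2⟩
      exact ⟨(x, p), ⟨h1, h2⟩, rfl⟩
  -- one-step property inside U
  have step : ∀ p : X₁ × X₂, ∀ x : X, (x, p.1) ∈ S₁ → (x, p.2) ∈ S₂ →
      ∀ d : D, P.A x + P.G d ∈ P.V →
      ∃ d₁ : D₁, ∃ d₂ : D₂,
        (P.A x + P.G d, P₁.A p.1 + P₁.G d₁) ∈ S₁ ∧
        (P.A x + P.G d, P₂.A p.2 + P₂.G d₂) ∈ S₂ := by
    intro p x hx1 hx2 d hd
    obtain ⟨d₁, _, hd₁S⟩ := (hsim₁ x p.1 hx1).1 d hd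
    obtain ⟨d₂, _, hd₂S⟩ := (hsim₂ x p.2 hx2).1 d hd
    exact ⟨d₁, d₂, hd₁S, hd₂S⟩
  -- U is admissible for the composed system
  have hUadm : (comp P₁ P₂).Admissible U := by
    constructor
    · rintro y ⟨p, hp, rfl⟩
      obtain ⟨x, hx1, hx2⟩ := (memU p).1 hp
      have hxV : x ∈ P.V := hfull₁ ▸ ⟨(x, p.1), hx1, rfl⟩
      obtain ⟨d, hd⟩ := V_step P hxV
      obtain ⟨d₁, d₂, hS1, hS2⟩ := step p x hx1 hx2 d hd
      rw [Submodule.mem_sup]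
      refine ⟨(P₁.A p.1 + P₁.G d₁, P₂.A p.2 + P₂.G d₂), ?_,
        (comp P₁ P₂).G (-d₁, -d₂), ⟨(-d₁, -d₂), rfl⟩, ?_⟩
      · exact (memU _).2 ⟨P.A x + P.G d, hS1, hS2⟩
      · simp [comp]
    · rintro y ⟨⟨x, p⟩, ⟨hx1, hx2⟩, rfl⟩
      have hp1 : p.1 ∈ P₁.V := hV₁ ⟨(x, p.1), hx1, rfl⟩
      have hp2 : p.2 ∈ P₂.V := hV₂ ⟨(x, p.2), hx2, rfl⟩
      have hC : P₁.C p.1 = P₂.C p.2 := by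
        rw [← (hsim₁ x p.1 hx1).2, ← (hsim₂ x p.2 hx2).2]
      simp [comp, LinearMap.mem_ker, V_ker P₁ hp1, V_ker P₂ hp2, hC]
  have hUle : U ≤ (comp P₁ P₂).V := le_sSup hUadm
  refine ⟨⟨?_, ?_, ?_⟩, ?_⟩
  · rintro x ⟨⟨x', p⟩, ⟨h1, h2⟩, rfl⟩
    exact hfull₁ ▸ ⟨(x', p.1), h1, rfl⟩
  · exact hUle
  · intro x p hp
    obtain ⟨h1, h2⟩ := hp
    constructor
    · intro d hd
      obtain ⟨d₁, d₂, hS1, hS2⟩ := step p x h1 h2 d hd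
      refine ⟨(d₁, d₂), ?_, ?_⟩
      · exact hUle ((memU _).2 ⟨P.A x + P.G d, hS1, hS2⟩)
      · exact ⟨hS1, hS2⟩
    · have e1 := (hsim₁ x p.1 h1).2
      have e2 := (hsim₂ x p.2 h2).2
      have hc : (comp P₁ P₂).C p = (1/2 : ℝ) • (P₁.C p.1 + P₂.C p.2) := by
        simp [comp]
      show P.C x = (comp P₁ P₂).C p
      rw [hc, ← e1, ← e2, ← two_smul ℝ (P.C x), smul_smul]
      norm_num
  · apply le_antisymm
    · rintro x ⟨⟨x', p⟩, ⟨h1, _⟩, rfl⟩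
      exact hfull₁ ▸ ⟨(x', p.1), h1, rfl⟩
    · intro x hx
      obtain ⟨⟨x', x₁⟩, hx1, rfl⟩ := hfull₁ ▸ hx
      obtain ⟨⟨x'', x₂⟩, hx2, hxx⟩ := hfull₂ ▸ hx
      have hx'' : x'' = (LinearMap.fst ℝ X X₁) (x', x₁) := hxx
      simp only [LinearMap.fst_apply] at hx''
      rw [hx''] at hx2
      exact ⟨(x', (x₁, x₂)), ⟨hx1, hx2⟩, rfl⟩
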